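/- Define φ : (0, 1/8] → ℝ by φ(t) = -I₀(1/2 + (1/8 - t)^{1/3}). Then there exist constants 0 < c₁ < c₂ < 1/8 such that φ is strictly concave on the interval (0, c₁) and strictly convex on the interval (c₂, 1/8). In particular φ, which equals the entropy density s(1/2, t) for 0 < t ≤ 1/8, fails to be concave near t = 1/8. -/

import Mathlib

open MeasureTheory Set

/-- `I₀(u) = (1/2)[u ln u + (1-u) ln(1-u)]`; since `Real.log 0 = 0`,
this automatically satisfies the continuous extension `I₀(0) = I₀(1) = 0`. -/
noncomputable def I0 (u : ℝ) : ℝ :=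
  (1/2) * (u * Real.log u + (1 - u) * Real.log (1 - u))

/-- A graphon: a measurable function `[0,1]² → [0,1]`, symmetric on `[0,1]²`. -/
def IsGraphon (g : ℝ → ℝ → ℝ) : Prop :=
  Measurable (Function.uncurry g) ∧
  (∀ x ∈ Icc (0:ℝ) 1, ∀ y ∈ Icc (0:ℝ) 1, g x y = g y x) ∧
  (∀ x ∈ Icc (0:ℝ) 1, ∀ y ∈ Icc (0:ℝ) 1, g x y ∈ Icc (0:ℝ) 1)

/-- Edge density `e(g) = ∫∫ g`. -/
noncomputable def edgeDensity (g : ℝ → ℝ → ℝ) : ℝ :=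
  ∫ x in Icc (0:ℝ) 1, ∫ y in Icc (0:ℝ) 1, g x y

/-- Triangle density `t(g) = ∫∫∫ g(x,y) g(y,z) g(z,x)`. -/
noncomputable def triangleDensity (g : ℝ → ℝ → ℝ) : ℝ :=
  ∫ x in Icc (0:ℝ) 1, ∫ y in Icc (0:ℝ) 1, ∫ z in Icc (0:ℝ) 1,
    g x y * g y z * g z x

/-- Rate function `I(g) = ∫∫ I₀(g(x,y))`. -/
noncomputable def rateFn (g : ℝ → ℝ → ℝ) : ℝ :=
  ∫ x in Icc (0:ℝ) 1, ∫ y in Icc (0:ℝ) 1, I0 (g x y)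

/-! Write `x = (1/8 - t)^{1/3}`, which decreases in `t`. Since `I₀ = -binEntropy / 2`, the chain
rule gives `φ'(t) = L(x) / (6x²)` with `L(x) = log(1/2 + x) - log(1/2 - x)`, so `φ` is convex
where `x ↦ L(x) / (6x²)` decreases and concave where it increases. The derivative of this slope
has the sign of `2x / (1 - 4x²) - L(x)`: negative for `0 < x ≤ 1/4` by `log y < y - 1` at
`y = (1/2 - x)/(1/2 + x)`, and positive for `49/100 ≤ x < 1/2`, where the simple pole of
`2x / (1 - 4x²)` at `1/2` beats the logarithmic singularity of `L`. -/

open Real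

lemma rpow_one_third_pow_three {s : ℝ} (hs : 0 ≤ s) : (s ^ ((1:ℝ)/3)) ^ 3 = s := by
  rw [one_div, ← Nat.cast_ofNat, rpow_inv_natCast_pow hs three_ne_zero]

lemma rpow_one_third_lt_iff {s a : ℝ} (hs : 0 ≤ s) (ha : 0 ≤ a) :
    s ^ ((1:ℝ)/3) < a ↔ s < a ^ 3 := by
  conv_rhs => rw [← rpow_one_third_pow_three hs]
  exact (pow_lt_pow_iff_left₀ (by positivity) ha three_ne_zero).symm

lemma lt_rpow_one_third_iff {s a : ℝ} (hs : 0 ≤ s) (ha : 0 ≤ a) :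
    a < s ^ ((1:ℝ)/3) ↔ a ^ 3 < s := by
  conv_rhs => rw [← rpow_one_third_pow_three hs]
  exact (pow_lt_pow_iff_left₀ ha (by positivity) three_ne_zero).symm

lemma hasDerivAt_rpow_one_third_sub {a t : ℝ} (h : t < a) :
    HasDerivAt (fun t => (a - t) ^ ((1:ℝ)/3)) (-1 / (3 * ((a - t) ^ ((1:ℝ)/3)) ^ 2)) t := by
  have hs : 0 < a - t := sub_pos.2 h
  refine (((hasDerivAt_id' t).const_sub a).rpow_const (Or.inl hs.ne')).congr_deriv ?_
  rw [rpow_sub_one hs.ne']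
  nth_rw 2 [← rpow_one_third_pow_three hs.le]
  field_simp

lemma I0_eq_neg_half_binEntropy (u : ℝ) : I0 u = -binEntropy u / 2 := by
  simp only [I0, binEntropy, log_inv]
  ring

noncomputable def logOdds (x : ℝ) : ℝ := log (1/2 + x) - log (1/2 - x)

noncomputable def profileSlope (x : ℝ) : ℝ := logOdds x / (6 * x ^ 2)

lemma hasDerivAt_logOdds {x : ℝ} (h₁ : -(1/2) < x) (h₂ : x < 1/2) :
    HasDerivAt logOdds (4 / (1 - 4 * x ^ 2)) x := by
  have hp : 1/2 + x ≠ 0 := by linarith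
  have hm : 1/2 - x ≠ 0 := by linarith
  refine ((((hasDerivAt_id' x).const_add _).log hp).sub
    (((hasDerivAt_id' x).const_sub _).log hm)).congr_deriv ?_
  have hp' : 1 + 2 * x ≠ 0 := by linarith
  have hm' : 1 - 2 * x ≠ 0 := by linarith
  rw [show 1 - 4 * x ^ 2 = (1 + 2 * x) * (1 - 2 * x) by ring]
  field_simp
  ring

lemma hasDerivAt_profileSlope {x : ℝ} (h₀ : 0 < x) (h₁ : x < 1/2) :
    HasDerivAt profileSlope ((2 * x / (1 - 4 * x ^ 2) - logOdds x) / (3 * x ^ 3)) x := by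
  have hq : 1 - 4 * x ^ 2 ≠ 0 := by nlinarith
  refine ((hasDerivAt_logOdds (by linarith) h₁).div ((hasDerivAt_pow 2 x).const_mul 6)
    (by positivity)).congr_deriv ?_
  field_simp
  ring

lemma two_mul_div_lt_logOdds {x : ℝ} (h₀ : 0 < x) (h₁ : x ≤ 1/4) :
    2 * x / (1 - 4 * x ^ 2) < logOdds x := by
  have hp : 0 < 1/2 + x := by linarith
  have hm : 0 < 1/2 - x := by linarith
  have hlog := log_lt_sub_one_of_pos (div_pos hm hp) (by
    rw [Ne, div_eq_one_iff_eq hp.ne']; linarith)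
  rw [log_div hm.ne' hp.ne'] at hlog
  calc 2 * x / (1 - 4 * x ^ 2) ≤ 1 - (1/2 - x) / (1/2 + x) := by
        rw [div_le_iff₀ (by nlinarith)]
        field_simp
        nlinarith
    _ < logOdds x := by unfold logOdds; linarith

lemma logOdds_lt_two_mul_div {x : ℝ} (h₀ : 49/100 ≤ x) (h₁ : x < 1/2) :
    logOdds x < 2 * x / (1 - 4 * x ^ 2) := by
  obtain ⟨s, hs, hs₁, rfl⟩ : ∃ s : ℝ, 0 < s ∧ s ≤ 1/10 ∧ x = 1/2 - s ^ 2 :=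
    ⟨√(1/2 - x), sqrt_pos.2 (by linarith), by
      rw [sqrt_le_left (by norm_num)]; linarith, by rw [sq_sqrt (by linarith)]; ring⟩
  have hlog_s : -log s < 1 / s := by
    have := log_le_sub_one_of_pos (inv_pos.2 hs)
    rw [log_inv] at this
    rw [one_div]; linarith
  have hlog_p : log (1 - s ^ 2) < 0 := log_neg (by nlinarith) (by nlinarith)
  have hodds : logOdds (1/2 - s ^ 2) = log (1 - s ^ 2) + 2 * -log s := by
    rw [logOdds, show 1/2 - (1/2 - s ^ 2) = s ^ 2 by ring, log_pow]; ring_nf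
  have hbound : 2 * (1 / s) ≤ 2 * (1/2 - s ^ 2) / (1 - 4 * (1/2 - s ^ 2) ^ 2) := by
    rw [show 1 - 4 * (1/2 - s ^ 2) ^ 2 = 4 * s ^ 2 * (1 - s ^ 2) by ring,
      le_div_iff₀ (by nlinarith)]
    field_simp
    nlinarith
  linarith

lemma profileSlope_strictAntiOn : StrictAntiOn profileSlope (Ioo 0 (1/4)) := by
  refine strictAntiOn_of_deriv_neg (convex_Ioo _ _)
    (fun x hx =>
      (hasDerivAt_profileSlope hx.1 (by linarith [hx.2])).continuousAt.continuousWithinAt)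
    fun x hx => ?_
  rw [interior_Ioo] at hx
  rw [(hasDerivAt_profileSlope hx.1 (by linarith [hx.2])).deriv]
  have hx₀ := hx.1
  exact div_neg_of_neg_of_pos (sub_neg.2 (two_mul_div_lt_logOdds hx₀ hx.2.le)) (by positivity)

lemma profileSlope_strictMonoOn : StrictMonoOn profileSlope (Ioo (49/100) (1/2)) := by
  refine strictMonoOn_of_deriv_pos (convex_Ioo _ _)
    (fun x hx =>
      (hasDerivAt_profileSlope (by linarith [hx.1]) hx.2).continuousAt.continuousWithinAt)
    fun x hx => ?_
  rw [interior_Ioo] at hx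
  rw [(hasDerivAt_profileSlope (by linarith [hx.1]) hx.2).deriv]
  have hx₀ : 0 < x := by linarith [hx.1]
  exact div_pos (sub_pos.2 (logOdds_lt_two_mul_div hx.1.le hx.2)) (by positivity)

lemma hasDerivAt_entropy_profile {t : ℝ} (h₀ : 0 < t) (h₁ : t < 1/8) :
    HasDerivAt (fun t : ℝ => -I0 (1/2 + (1/8 - t) ^ ((1:ℝ)/3)))
      (profileSlope ((1/8 - t) ^ ((1:ℝ)/3))) t := by
  have hs : 0 ≤ 1/8 - t := by linarith
  set x := (1/8 - t) ^ ((1:ℝ)/3) with hx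
  have hx₀ : 0 < x := rpow_pos_of_pos (by linarith) _
  have hx₁ : x < 1/2 := (rpow_one_third_lt_iff hs (by norm_num)).2 (by linarith)
  have h := ((hasDerivAt_binEntropy (p := 1/2 + x) (by linarith) (by linarith)).comp t
    ((hasDerivAt_rpow_one_third_sub h₁).const_add (1/2))).div_const 2
  simp only [I0_eq_neg_half_binEntropy, neg_div, neg_neg]
  refine h.congr_deriv ?_
  rw [← hx, profileSlope, logOdds, show 1 - (1/2 + x) = 1/2 - x by ring]
  field_simp
  ring

/-- The entropy profile `φ(t) = -I₀(1/2 + (1/8 - t)^{1/3})` on `(0, 1/8]` is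
strictly concave on some initial interval `(0, c₁)` and strictly convex on some
final interval `(c₂, 1/8)`, with `0 < c₁ < c₂ < 1/8`. -/
theorem entropy_profile_convexity :
    ∃ c₁ c₂ : ℝ, 0 < c₁ ∧ c₁ < c₂ ∧ c₂ < 1/8 ∧
      StrictConcaveOn ℝ (Ioo (0:ℝ) c₁)
        (fun t : ℝ => -I0 (1/2 + (1/8 - t) ^ ((1:ℝ)/3))) ∧
      StrictConvexOn ℝ (Ioo c₂ (1/8 : ℝ))
        (fun t : ℝ => -I0 (1/2 + (1/8 - t) ^ ((1:ℝ)/3))) := by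
  set φ := fun t : ℝ => -I0 (1/2 + (1/8 - t) ^ ((1:ℝ)/3))
  set x := fun t : ℝ => (1/8 - t) ^ ((1:ℝ)/3)
  have hφ' : EqOn (deriv φ) (profileSlope ∘ x) (Ioo 0 (1/8)) := fun t ht =>
    (hasDerivAt_entropy_profile ht.1 ht.2).deriv
  have hφ : ContinuousOn φ (Ioo 0 (1/8)) := fun t ht =>
    (hasDerivAt_entropy_profile ht.1 ht.2).continuousAt.continuousWithinAt
  have hx : StrictAntiOn x (Iio (1/8)) := fun s hs t ht hst =>
    rpow_lt_rpow (by linarith [ht.out]) (by linarith) (by norm_num)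
  refine ⟨1/200, 7/64, by norm_num, by norm_num, by norm_num, ?_, ?_⟩
  · refine StrictAntiOn.strictConcaveOn_of_deriv (convex_Ioo _ _)
      (hφ.mono (Ioo_subset_Ioo_right (by norm_num))) ?_
    rw [interior_Ioo]
    refine (profileSlope_strictMonoOn.comp_strictAntiOn
      (hx.mono fun t ht => mem_Iio.2 (by linarith [ht.2])) fun t ht => ⟨?_, ?_⟩).congr
      fun t ht => (hφ' ⟨ht.1, by linarith [ht.2]⟩).symm
    · exact (lt_rpow_one_third_iff (by linarith [ht.2]) (by norm_num)).2
        (by norm_num; linarith [ht.2])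
    · exact (rpow_one_third_lt_iff (by linarith [ht.2]) (by norm_num)).2 (by linarith [ht.1])
  · refine StrictMonoOn.strictConvexOn_of_deriv (convex_Ioo _ _)
      (hφ.mono (Ioo_subset_Ioo_left (by norm_num))) ?_
    rw [interior_Ioo]
    refine (profileSlope_strictAntiOn.comp (hx.mono fun t ht => ht.2) fun t ht => ⟨?_, ?_⟩).congr
      fun t ht => (hφ' ⟨by linarith [ht.1], ht.2⟩).symm
    · exact rpow_pos_of_pos (by linarith [ht.2]) _
    · exact (rpow_one_third_lt_iff (by linarith [ht.2]) (by norm_num)).2 (by linarith [ht.1])
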